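/- arXiv:2002.00664 — 2 statements merged into one kernel-verified Lean document; each statement's English description precedes it below -/
import Mathlib

section
/- Let c < 0, a > 0, M ≥ 1, T > 0, b ∈ (0,1), β₀ ∈ (0,1). Define β_F(T) as the solution at time T of: β' = (a/M)(1−β) on [0,bT] then β' = (c/M)β(1−β) on [bT,T], starting at β₀; define β_L(T) via β' = (c/M)β(1−β) on [0,(1−b)T] then β' = (a/M)(1−β) on [(1−b)T,T], starting at β₀. Then β_L(T) > β_F(T). -/
/-!
Both policies are piecewise solutions of two scalar ODEs with closed forms: under influence
`1 - β` decays by the factor `m = exp (-(a/M) b T)`, and under the organic drift the odds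
`β / (1 - β)` are multiplied by `k = exp ((c/M)(1 - b) T) < 1`.  Writing `u = 1 - β₀`, the two
end states satisfy `1 - β_F(T) = u m / (u m + (1 - u m) k)` and `1 - β_L(T) = u m / (u + β₀ k)`,
and the second denominator exceeds the first by `u (1 - m) (1 - k) > 0`.
-/

open Real Set intervalIntegral

lemma eq_of_hasDerivAt_zero_of_lt {f : ℝ → ℝ} {t₀ t₁ : ℝ} (h : t₀ < t₁)
    (hf : ContinuousOn f (Icc t₀ t₁)) (hd : ∀ t ∈ Ioo t₀ t₁, HasDerivAt f 0 t) :
    f t₁ = f t₀ := by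
  obtain ⟨_, _, hslope⟩ := exists_hasDerivAt_eq_slope f (fun _ ↦ 0) h hf hd
  rw [eq_comm, div_eq_zero_iff, sub_eq_zero] at hslope
  exact hslope.resolve_right (sub_pos.mpr h).ne'

lemma eq_mul_exp_integral_of_hasDerivAt_mul {f g : ℝ → ℝ} {t₀ t₁ : ℝ} (h : t₀ < t₁)
    (hf : ContinuousOn f (Icc t₀ t₁)) (hg : Continuous g)
    (hd : ∀ t ∈ Ioo t₀ t₁, HasDerivAt f (g t * f t) t) :
    f t₁ = f t₀ * exp (∫ s in t₀..t₁, g s) := by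
  have hG : ∀ t, HasDerivAt (fun t ↦ ∫ s in t₀..t, g s) (g t) t := fun t ↦
    integral_hasDerivAt_right (hg.intervalIntegrable _ _)
      hg.stronglyMeasurable.stronglyMeasurableAtFilter hg.continuousAt
  have hconst := eq_of_hasDerivAt_zero_of_lt (f := fun t ↦ f t * exp (-∫ s in t₀..t, g s)) h
    (hf.mul (continuous_primitive (hg.intervalIntegrable) t₀).neg.rexp.continuousOn)
    fun t ht ↦ ((hd t ht).mul (hG t).neg.exp).congr_deriv (by ring)
  simp only [integral_same, neg_zero, exp_zero, mul_one] at hconst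
  rw [← hconst, mul_assoc, ← exp_add, neg_add_cancel, exp_zero, mul_one]

lemma one_sub_eq_mul_exp_of_hasDerivAt_mul_one_sub {β : ℝ → ℝ} {α t₀ t₁ : ℝ} (h : t₀ < t₁)
    (hβ : ContinuousOn β (Icc t₀ t₁))
    (hd : ∀ t ∈ Ioo t₀ t₁, HasDerivAt β (α * (1 - β t)) t) :
    1 - β t₁ = (1 - β t₀) * exp (-α * (t₁ - t₀)) := by
  have := eq_mul_exp_integral_of_hasDerivAt_mul (f := fun t ↦ 1 - β t) (g := fun _ ↦ -α) h
    (continuousOn_const.sub hβ) continuous_const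
    fun t ht ↦ ((hd t ht).const_sub 1).congr_deriv (by ring)
  rwa [integral_const, smul_eq_mul, mul_comm (t₁ - t₀)] at this

/-- The odds `β / (1 - β)` grow like `exp (κ t)`, stated without division so that no a priori
bound on `β` is needed. -/
lemma mul_one_sub_eq_mul_exp_of_hasDerivAt_logistic {β : ℝ → ℝ} {κ t₀ t₁ : ℝ} (h : t₀ < t₁)
    (hβ : Continuous β) (hd : ∀ t ∈ Ioo t₀ t₁, HasDerivAt β (κ * β t * (1 - β t)) t) :
    β t₁ * (1 - β t₀) = β t₀ * (1 - β t₁) * exp (κ * (t₁ - t₀)) := by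
  have hβt := eq_mul_exp_integral_of_hasDerivAt_mul (g := fun s ↦ κ * (1 - β s)) h
    hβ.continuousOn (by fun_prop) fun t ht ↦ (hd t ht).congr_deriv (by ring)
  have hsub := eq_mul_exp_integral_of_hasDerivAt_mul (f := fun t ↦ 1 - β t)
    (g := fun s ↦ -(κ * β s)) h (continuous_const.sub hβ).continuousOn (by fun_prop)
    fun t ht ↦ ((hd t ht).const_sub 1).congr_deriv (by ring)
  have hint : ∫ s in t₀..t₁, κ * (1 - β s) = κ * (t₁ - t₀) + ∫ s in t₀..t₁, -(κ * β s) := by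
    have hi : IntervalIntegrable (fun s ↦ -(κ * β s)) MeasureTheory.volume t₀ t₁ :=
      (by fun_prop : Continuous fun s ↦ -(κ * β s)).intervalIntegrable _ _
    rw [mul_comm, ← smul_eq_mul, ← integral_const, ← integral_add intervalIntegrable_const hi]
    exact integral_congr fun s _ ↦ by ring
  have hexp : exp (∫ s in t₀..t₁, κ * (1 - β s))
      = exp (κ * (t₁ - t₀)) * exp (∫ s in t₀..t₁, -(κ * β s)) := by rw [hint, exp_add]
  linear_combination (1 - β t₀) * hβt - β t₀ * exp (κ * (t₁ - t₀)) * hsub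
    + β t₀ * (1 - β t₀) * hexp

lemma lt_of_influence_first_last_relations {β₀ x y z w m k : ℝ} (hβ₀ : β₀ < 1)
    (hm₀ : 0 < m) (hm₁ : m < 1) (hk₀ : 0 < k) (hk₁ : k < 1)
    (hx : 1 - x = (1 - β₀) * m) (hy : y * (1 - x) = x * (1 - y) * k)
    (hz : z * (1 - β₀) = β₀ * (1 - z) * k) (hw : 1 - w = (1 - z) * m) :
    y < w := by
  set u := 1 - β₀
  have hu : 0 < u := sub_pos.mpr hβ₀
  have hy' : (1 - y) * (u * m + (1 - u * m) * k) = u * m := by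
    linear_combination -hy + (y + (1 - y) * k) * hx
  have hw' : (1 - w) * (u + β₀ * k) = u * m := by
    linear_combination (u + β₀ * k) * hw - m * hz
  have hD₁ : 0 < u * m + (1 - u * m) * k := by nlinarith [mul_pos hu hm₀]
  have hD : u * m + (1 - u * m) * k < u + β₀ * k := by
    nlinarith [mul_pos (mul_pos hu (sub_pos.mpr hm₁)) (sub_pos.mpr hk₁)]
  suffices 1 - w < 1 - y by linarith
  calc 1 - w = u * m / (u + β₀ * k) := (eq_div_iff (by linarith)).mpr hw'
    _ < u * m / (u * m + (1 - u * m) * k) := div_lt_div_of_pos_left (by positivity) hD₁ hD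
    _ = 1 - y := ((eq_div_iff hD₁.ne').mpr hy').symm

/-- ODE comparison underlying optimality of influencing last when the organic drift
coefficient `c < 0`: `β_L(T) > β_F(T)`. -/
theorem influence_last_optimal_of_neg_drift (c a M T b β₀ : ℝ)
    (hc : c < 0) (ha : 0 < a) (hM : 1 ≤ M) (hT : 0 < T)
    (hb : b ∈ Set.Ioo (0:ℝ) 1) (hβ₀ : β₀ ∈ Set.Ioo (0:ℝ) 1)
    (βF βL : ℝ → ℝ) (hFc : Continuous βF) (hLc : Continuous βL)
    (hF0 : βF 0 = β₀) (hL0 : βL 0 = β₀)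
    (hF1 : ∀ t ∈ Set.Ioo 0 (b * T), HasDerivAt βF ((a / M) * (1 - βF t)) t)
    (hF2 : ∀ t ∈ Set.Ioo (b * T) T, HasDerivAt βF ((c / M) * βF t * (1 - βF t)) t)
    (hL1 : ∀ t ∈ Set.Ioo 0 ((1 - b) * T), HasDerivAt βL ((c / M) * βL t * (1 - βL t)) t)
    (hL2 : ∀ t ∈ Set.Ioo ((1 - b) * T) T, HasDerivAt βL ((a / M) * (1 - βL t)) t) :
    βF T < βL T := by
  obtain ⟨hb₀, hb₁⟩ := hb
  have hM₀ : 0 < M := by linarith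
  have hbT : 0 < b * T := mul_pos hb₀ hT
  have hbT' : 0 < (1 - b) * T := mul_pos (sub_pos.mpr hb₁) hT
  have hm : exp (-(a / M) * (b * T)) < 1 := 
    exp_lt_one_iff.mpr (by rw [neg_mul, neg_lt_zero]; positivity)
  have hk : exp (c / M * ((1 - b) * T)) < 1 :=
    exp_lt_one_iff.mpr (mul_neg_of_neg_of_pos (div_neg_of_neg_of_pos hc hM₀) hbT')
  have hF₁ := one_sub_eq_mul_exp_of_hasDerivAt_mul_one_sub hbT hFc.continuousOn hF1
  have hF₂ := mul_one_sub_eq_mul_exp_of_hasDerivAt_logistic (by linarith) hFc hF2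
  have hL₁ := mul_one_sub_eq_mul_exp_of_hasDerivAt_logistic hbT' hLc hL1
  have hL₂ := one_sub_eq_mul_exp_of_hasDerivAt_mul_one_sub (by linarith) hLc.continuousOn hL2
  rw [hF0, sub_zero] at hF₁
  rw [show T - b * T = (1 - b) * T by ring] at hF₂
  rw [hL0, sub_zero] at hL₁
  rw [show T - (1 - b) * T = b * T by ring] at hL₂
  exact lt_of_influence_first_last_relations hβ₀.2 (exp_pos _) hm (exp_pos _) hk hF₁ hF₂ hL₁ hL₂
end

section
/- Let c > 0, a > 0, M ≥ 1, T > 0, b ∈ (0,1), β₀ ∈ (0,1). With β_F and β_L defined as the solutions of β' = (a/M)(1−β) on the influence window and β' = (c/M)β(1−β) otherwise (window first for β_F, window last for β_L, both starting at β₀), we have β_F(T) > β_L(T). -/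
/-!
Both dynamics integrate in closed form. On the influence window `1 - β` decays like
`exp (-(a/M) t)`, so the window contracts `1 - β` by the factor `P = exp (-(a/M) b T)`; on the
organic window the odds `β / (1 - β)` grow like `exp ((c/M) t)`, so the window multiplies them by
`Q = exp ((c/M) (1 - b) T) > 1`. In either order `1 - β(T) = (1 - β₀) P / (1 + x (Q - 1))`, where
`x` is the value of `β` when the organic phase starts: `β₀` when influencing last, and the larger
value `1 - (1 - β₀) P` when influencing first.
-/

open Set Real

/-- Time-`s` map of `β' = α (1 - β)`. -/
noncomputable def linearFlow (α s x : ℝ) : ℝ := 1 - (1 - x) * exp (-α * s)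

/-- Time-`s` map of `β' = γ β (1 - β)`. -/
noncomputable def logisticFlow (γ s x : ℝ) : ℝ := x * exp (γ * s) / (1 - x + x * exp (γ * s))

section Flows

variable {f : ℝ → ℝ} {t₀ t₁ : ℝ}

theorem eq_mul_exp_of_hasDerivAt_mul_self {γ : ℝ} (h : t₀ < t₁)
    (hc : ContinuousOn f (Icc t₀ t₁)) (hd : ∀ t ∈ Ioo t₀ t₁, HasDerivAt f (γ * f t) t) :
    f t₁ = f t₀ * exp (γ * (t₁ - t₀)) := by
  set g : ℝ → ℝ := fun t ↦ f t * exp (-γ * t)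
  have hg : ∀ t ∈ Ioo t₀ t₁, HasDerivAt g 0 t := fun t ht ↦
    ((hd t ht).mul ((hasDerivAt_id' t).const_mul (-γ)).exp).congr_deriv (by ring)
  obtain ⟨-, -, hslope⟩ :=
    exists_hasDerivAt_eq_slope g (fun _ ↦ 0) h (hc.mul (by fun_prop)) hg
  have hg_eq : g t₁ = g t₀ := by
    rw [eq_comm, div_eq_zero_iff, sub_eq_zero] at hslope
    exact hslope.resolve_right (sub_ne_zero.2 h.ne')
  calc f t₁ = g t₁ * exp (γ * t₁) := by simp only [g, mul_assoc, ← exp_add]; simp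
    _ = f t₀ * exp (γ * (t₁ - t₀)) := by
      simp only [hg_eq, g, mul_assoc, ← exp_add]; ring_nf

theorem eq_linearFlow_of_hasDerivAt {α : ℝ} (h : t₀ < t₁)
    (hc : ContinuousOn f (Icc t₀ t₁)) (hd : ∀ t ∈ Ioo t₀ t₁, HasDerivAt f (α * (1 - f t)) t) :
    f t₁ = linearFlow α (t₁ - t₀) (f t₀) := by
  have := eq_mul_exp_of_hasDerivAt_mul_self (f := fun t ↦ 1 - f t) (γ := -α) h
    (continuousOn_const.sub hc) fun t ht ↦ ((hd t ht).const_sub 1).congr_deriv (by ring)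
  rw [linearFlow]
  linarith

/-- `(1 - f t) exp (γ t)` has derivative `γ exp (γ t) (1 - f t)²`, so it stays positive. -/
theorem lt_one_of_hasDerivAt_logistic {γ : ℝ} (hγ : 0 ≤ γ)
    (hc : ContinuousOn f (Icc t₀ t₁))
    (hd : ∀ t ∈ Ioo t₀ t₁, HasDerivAt f (γ * f t * (1 - f t)) t) (h₀ : f t₀ < 1) :
    ∀ t ∈ Icc t₀ t₁, f t < 1 := by
  set ψ : ℝ → ℝ := fun t ↦ (1 - f t) * exp (γ * t)
  have hψ : MonotoneOn ψ (Icc t₀ t₁) := by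
    refine monotoneOn_of_hasDerivWithinAt_nonneg (f' := fun t ↦ γ * exp (γ * t) * (1 - f t) ^ 2)
      (convex_Icc t₀ t₁) ((continuousOn_const.sub hc).mul (by fun_prop)) (fun t ht ↦ ?_)
      (fun t _ ↦ by positivity)
    rw [interior_Icc] at ht
    exact (((hd t ht).const_sub 1).mul ((hasDerivAt_id' t).const_mul γ).exp).hasDerivWithinAt
      |>.congr_deriv (by ring)
  intro t ht
  have hψ₀ : 0 < ψ t₀ := mul_pos (sub_pos.2 h₀) (exp_pos _)
  have hψt : 0 < (1 - f t) * exp (γ * t) :=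
    hψ₀.trans_le (hψ (left_mem_Icc.2 (ht.1.trans ht.2)) ht ht.1)
  exact sub_pos.1 (pos_of_mul_pos_left hψt (exp_pos _).le)

theorem eq_logisticFlow_of_hasDerivAt {γ : ℝ} (hγ : 0 ≤ γ) (h : t₀ < t₁)
    (hc : ContinuousOn f (Icc t₀ t₁))
    (hd : ∀ t ∈ Ioo t₀ t₁, HasDerivAt f (γ * f t * (1 - f t)) t) (h₀ : 0 ≤ f t₀) (h₁ : f t₀ < 1) :
    f t₁ = logisticFlow γ (t₁ - t₀) (f t₀) := by
  have hlt := lt_one_of_hasDerivAt_logistic hγ hc hd h₁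
  have hne : ∀ t ∈ Icc t₀ t₁, 1 - f t ≠ 0 := fun t ht ↦ (sub_pos.2 (hlt t ht)).ne'
  have hodds := eq_mul_exp_of_hasDerivAt_mul_self (f := fun t ↦ f t / (1 - f t)) (γ := γ) h
    (hc.div (continuousOn_const.sub hc) hne) fun t ht ↦ by
      have hnet := hne t (Ioo_subset_Icc_self ht)
      refine ((hd t ht).div ((hd t ht).const_sub 1) hnet).congr_deriv ?_
      field_simp
      ring
  have hD : 0 < 1 - f t₀ + f t₀ * exp (γ * (t₁ - t₀)) := by
    have := exp_pos (γ * (t₁ - t₀)); nlinarith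
  rw [logisticFlow, eq_div_iff hD.ne']
  field_simp [hne t₁ (right_mem_Icc.2 h.le), hne t₀ (left_mem_Icc.2 h.le)] at hodds
  linear_combination hodds

end Flows

section FlowAlgebra

variable {α γ s u x : ℝ}

theorem one_sub_linearFlow : 1 - linearFlow α s x = (1 - x) * exp (-α * s) := by
  rw [linearFlow, sub_sub_cancel]

theorem linearFlow_lt_one (hx : x < 1) : linearFlow α s x < 1 := by
  rw [← sub_pos, one_sub_linearFlow]
  exact mul_pos (sub_pos.2 hx) (exp_pos _)

theorem lt_linearFlow (hα : 0 < α) (hs : 0 < s) (hx : x < 1) : x < linearFlow α s x := by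
  have hP : exp (-α * s) < 1 := exp_lt_one_iff.2 (by nlinarith)
  rw [linearFlow]
  nlinarith

theorem one_sub_logisticFlow (h : 1 - x + x * exp (γ * u) ≠ 0) :
    1 - logisticFlow γ u x = (1 - x) / (1 - x + x * exp (γ * u)) := by
  rw [logisticFlow, eq_div_iff h, sub_mul, div_mul_cancel₀ _ h]
  ring

theorem linearFlow_logisticFlow_lt (hα : 0 < α) (hs : 0 < s) (hγ : 0 < γ) (hu : 0 < u)
    (hx₀ : 0 ≤ x) (hx₁ : x < 1) :
    linearFlow α s (logisticFlow γ u x) < logisticFlow γ u (linearFlow α s x) := by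
  set y := linearFlow α s x
  set P := exp (-α * s)
  set Q := exp (γ * u)
  have hxy : x < y := lt_linearFlow hα hs hx₁
  have hy : 1 - y = (1 - x) * P := one_sub_linearFlow
  have hQ : 1 < Q := one_lt_exp_iff.2 (mul_pos hγ hu)
  have hDx : 0 < 1 - x + x * Q := by nlinarith
  have hDy : 0 < 1 - y + y * Q := by nlinarith [linearFlow_lt_one (α := α) (s := s) hx₁]
  rw [← sub_lt_sub_iff_left 1, one_sub_linearFlow, one_sub_logisticFlow hDx.ne',
    one_sub_logisticFlow hDy.ne', hy, div_mul_eq_mul_div]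
  exact div_lt_div_of_pos_left (mul_pos (sub_pos.2 hx₁) (exp_pos _)) hDx (by nlinarith)

end FlowAlgebra

/-- ODE comparison underlying optimality of influencing first when the organic drift
coefficient `c > 0`: `β_F(T) > β_L(T)`. -/
theorem influence_first_optimal_of_pos_drift (c a M T b β₀ : ℝ)
    (hc : 0 < c) (ha : 0 < a) (hM : 1 ≤ M) (hT : 0 < T)
    (hb : b ∈ Set.Ioo (0:ℝ) 1) (hβ₀ : β₀ ∈ Set.Ioo (0:ℝ) 1)
    (βF βL : ℝ → ℝ) (hFc : Continuous βF) (hLc : Continuous βL)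
    (hF0 : βF 0 = β₀) (hL0 : βL 0 = β₀)
    (hF1 : ∀ t ∈ Set.Ioo 0 (b * T), HasDerivAt βF ((a / M) * (1 - βF t)) t)
    (hF2 : ∀ t ∈ Set.Ioo (b * T) T, HasDerivAt βF ((c / M) * βF t * (1 - βF t)) t)
    (hL1 : ∀ t ∈ Set.Ioo 0 ((1 - b) * T), HasDerivAt βL ((c / M) * βL t * (1 - βL t)) t)
    (hL2 : ∀ t ∈ Set.Ioo ((1 - b) * T) T, HasDerivAt βL ((a / M) * (1 - βL t)) t) :
    βL T < βF T := by
  have hα : 0 < a / M := div_pos ha (by linarith)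
  have hγ : 0 < c / M := div_pos hc (by linarith)
  have hs : 0 < b * T := mul_pos hb.1 hT
  have hu : 0 < (1 - b) * T := mul_pos (sub_pos.2 hb.2) hT
  have hFs : βF (b * T) = linearFlow (a / M) (b * T) β₀ := by
    rw [eq_linearFlow_of_hasDerivAt hs hFc.continuousOn hF1, hF0, sub_zero]
  have hF : βF T = logisticFlow (c / M) ((1 - b) * T) (linearFlow (a / M) (b * T) β₀) := by
    rw [eq_logisticFlow_of_hasDerivAt hγ.le (by linarith) hFc.continuousOn hF2
      (hFs ▸ hβ₀.1.le.trans (lt_linearFlow hα hs hβ₀.2).le) (hFs ▸ linearFlow_lt_one hβ₀.2), hFs,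
      show T - b * T = (1 - b) * T by ring]
  have hLu : βL ((1 - b) * T) = logisticFlow (c / M) ((1 - b) * T) β₀ := by
    rw [eq_logisticFlow_of_hasDerivAt hγ.le hu hLc.continuousOn hL1 (hL0 ▸ hβ₀.1.le)
      (hL0 ▸ hβ₀.2), hL0, sub_zero]
  have hL : βL T = linearFlow (a / M) (b * T) (logisticFlow (c / M) ((1 - b) * T) β₀) := by
    rw [eq_linearFlow_of_hasDerivAt (by linarith) hLc.continuousOn hL2, hLu,
      show T - (1 - b) * T = b * T by ring]
  rw [hF, hL]
  exact linearFlow_logisticFlow_lt hα hs hγ hu hβ₀.1.le hβ₀.2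
end
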